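/- arXiv:2111.02747 — 7 statements merged into one kernel-verified Lean document; each statement's English description precedes it below -/
import Mathlib

section
/- For 0 < α < 1 and all x, y ≥ 0, the Mittag-Leffler function satisfies E_α((x+y)^α) ≤ E_α(x^α) · E_α(y^α). -/
noncomputable def mittagLeffler (α x : ℝ) : ℝ :=
  ∑' k : ℕ, x ^ k / Real.Gamma (α * k + 1)

/-!
Write `g_p(t) = t ^ p / Γ(p + 1)`, so that `E_α(t ^ α) = ∑ₖ g_{αk}(t)`. The Beta integral says
that the Riemann–Liouville integral `I^α f (T) = Γ(α)⁻¹ ∫₀ᵀ (T - u) ^ (α - 1) f(u) du` maps `g_p`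
to `g_{p+α}`. Split the integral defining `I^α g_{αn} (x + y)` at `x`: since `α ≤ 1`, the kernel
decreases in `T`, so the part over `[0, x]` is at most `I^α g_{αn} (x)`, and the part over
`[x, x + y]` is `I^α` of `g_{αn}(x + ·)` at `y`. Induction on `n` then gives
`g_{αn}(x + y) ≤ ∑_{i+j=n} g_{αi}(x) g_{αj}(y)`, and summing over `n` produces the Cauchy
product of `E_α(x ^ α)` and `E_α(y ^ α)`.
-/

open Real Set MeasureTheory Finset.HasAntidiagonal

noncomputable def powDivGamma (p t : ℝ) : ℝ := t ^ p / Gamma (p + 1)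

noncomputable def riemannLiouville (α : ℝ) (f : ℝ → ℝ) (T : ℝ) : ℝ :=
  (Gamma α)⁻¹ * ∫ u in (0:ℝ)..T, (T - u) ^ (α - 1) * f u

theorem integral_rpow_mul_rpow_sub {a s t : ℝ} (ha : 0 < a) (hs : 0 < s) (ht : 0 < t) :
    ∫ x in (0:ℝ)..a, x ^ (s - 1) * (a - x) ^ (t - 1) =
      a ^ (s + t - 1) * ProbabilityTheory.beta s t := by
  apply Complex.ofReal_injective
  have hcast : ∀ x ∈ uIcc 0 a, ((x ^ (s - 1) * (a - x) ^ (t - 1) : ℝ) : ℂ) =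
      (x : ℂ) ^ ((s : ℂ) - 1) * ((a : ℂ) - x) ^ ((t : ℂ) - 1) := by
    intro x hx
    rw [uIcc_of_le ha.le] at hx
    push_cast [Complex.ofReal_cpow hx.1, Complex.ofReal_cpow (sub_nonneg.2 hx.2)]
    rfl
  rw [← intervalIntegral.integral_ofReal, intervalIntegral.integral_congr hcast,
    Complex.betaIntegral_scaled _ _ ha,
    Complex.betaIntegral_eq_Gamma_mul_div _ _ (by simpa) (by simpa)]
  push_cast [ProbabilityTheory.beta, Complex.ofReal_cpow ha.le, Complex.Gamma_ofReal]
  rw [← Complex.ofReal_add, Complex.Gamma_ofReal]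

theorem intervalIntegrable_rpow_sub_mul {α T : ℝ} (hα : 0 < α) {f : ℝ → ℝ}
    (hf : ContinuousOn f (uIcc 0 T)) :
    IntervalIntegrable (fun u => (T - u) ^ (α - 1) * f u) volume 0 T := by
  have hker := (intervalIntegral.intervalIntegrable_rpow' (a := T - T) (b := T - 0)
    (by linarith : -1 < α - 1)).comp_sub_left T
  simp only [sub_self, sub_zero] at hker
  exact hker.symm.mul_continuousOn hf

theorem riemannLiouville_powDivGamma {α p T : ℝ} (hα : 0 < α) (hp : 0 ≤ p) (hT : 0 ≤ T) :
    riemannLiouville α (powDivGamma p) T = powDivGamma (p + α) T := by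
  obtain rfl | hT := hT.eq_or_lt
  · simp [riemannLiouville, powDivGamma, zero_rpow (by positivity : p + α ≠ 0)]
  have hcongr : ∀ u ∈ uIcc 0 T, (T - u) ^ (α - 1) * powDivGamma p u =
      (Gamma (p + 1))⁻¹ * (u ^ (p + 1 - 1) * (T - u) ^ (α - 1)) := by
    intro u _
    rw [powDivGamma, add_sub_cancel_right]
    ring
  rw [riemannLiouville, intervalIntegral.integral_congr hcongr,
    intervalIntegral.integral_const_mul, integral_rpow_mul_rpow_sub hT (by linarith) hα,
    ProbabilityTheory.beta, powDivGamma, show p + 1 + α - 1 = p + α by ring,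
    show p + 1 + α = p + α + 1 by ring]
  have := (Gamma_pos_of_pos hα).ne'
  have := (Gamma_pos_of_pos (by linarith : 0 < p + 1)).ne'
  field_simp

theorem riemannLiouville_mono {α T : ℝ} (hα : 0 < α) (hT : 0 ≤ T) {f g : ℝ → ℝ}
    (hf : ContinuousOn f (Icc 0 T)) (hg : ContinuousOn g (Icc 0 T))
    (hfg : ∀ u ∈ Icc 0 T, f u ≤ g u) :
    riemannLiouville α f T ≤ riemannLiouville α g T := by
  rw [← uIcc_of_le hT] at hf hg
  refine mul_le_mul_of_nonneg_left (intervalIntegral.integral_mono_on hT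
    (intervalIntegrable_rpow_sub_mul hα hf) (intervalIntegrable_rpow_sub_mul hα hg)
    fun u hu => ?_) (inv_nonneg.2 (Gamma_pos_of_pos hα).le)
  exact mul_le_mul_of_nonneg_left (hfg u hu) (rpow_nonneg (sub_nonneg.2 hu.2) _)

theorem riemannLiouville_sum_mul {α T : ℝ} (hα : 0 < α) {ι : Type*} (s : Finset ι)
    (c : ι → ℝ) {f : ι → ℝ → ℝ} (hf : ∀ i ∈ s, ContinuousOn (f i) (uIcc 0 T)) :
    riemannLiouville α (fun v => ∑ i ∈ s, c i * f i v) T =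
      ∑ i ∈ s, c i * riemannLiouville α (f i) T := by
  have hint : ∀ i ∈ s, IntervalIntegrable (fun u => c i * ((T - u) ^ (α - 1) * f i u))
      volume 0 T := fun i hi =>
    (intervalIntegrable_rpow_sub_mul hα (hf i hi)).const_mul (c i)
  simp only [riemannLiouville, Finset.mul_sum, mul_left_comm _ (c _)]
  rw [intervalIntegral.integral_finsetSum hint, Finset.mul_sum]
  simp only [intervalIntegral.integral_const_mul, mul_left_comm]

theorem riemannLiouville_add_le {α x y : ℝ} (hα0 : 0 < α) (hα1 : α ≤ 1) (hx : 0 ≤ x)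
    (hy : 0 ≤ y) {f : ℝ → ℝ} (hf : ContinuousOn f (Icc 0 (x + y)))
    (hf0 : ∀ u ∈ Icc 0 x, 0 ≤ f u) :
    riemannLiouville α f (x + y) ≤
      riemannLiouville α f x + riemannLiouville α (fun v => f (x + v)) y := by
  have hxy : x ≤ x + y := le_add_of_nonneg_right hy
  have hx_mem : x ∈ uIcc 0 (x + y) := by rw [uIcc_of_le (hx.trans hxy)]; exact ⟨hx, hxy⟩
  have hI : IntervalIntegrable (fun u => (x + y - u) ^ (α - 1) * f u) volume 0 (x + y) :=
    intervalIntegrable_rpow_sub_mul hα0 (by rwa [uIcc_of_le (hx.trans hxy)])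
  have hfx : ContinuousOn f (uIcc 0 x) :=
    hf.mono (by rw [uIcc_of_le hx]; exact Icc_subset_Icc_right hxy)
  -- Only on `Ioo 0 x`: at `u = x` the junk value `0 ^ (α - 1) = 0` breaks the pointwise bound.
  have hnear : ∫ u in 0..x, (x + y - u) ^ (α - 1) * f u ≤
      ∫ u in 0..x, (x - u) ^ (α - 1) * f u := by
    refine intervalIntegral.integral_mono_on_of_le_Ioo hx
      (hI.mono_set (uIcc_subset_uIcc_left hx_mem))
      (intervalIntegrable_rpow_sub_mul hα0 hfx) fun u hu => ?_
    exact mul_le_mul_of_nonneg_right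
      (rpow_le_rpow_of_nonpos (sub_pos.2 hu.2) (by linarith) (by linarith))
      (hf0 u (Ioo_subset_Icc_self hu))
  have hfar : ∫ u in x..x + y, (x + y - u) ^ (α - 1) * f u =
      ∫ v in 0..y, (y - v) ^ (α - 1) * f (x + v) := by
    simpa [add_sub_add_left_eq_sub] using
      (intervalIntegral.integral_comp_add_left (fun u => (x + y - u) ^ (α - 1) * f u) x
        (a := 0) (b := y)).symm
  rw [riemannLiouville, ← intervalIntegral.integral_add_adjacent_intervals
    (hI.mono_set (uIcc_subset_uIcc_left hx_mem)) (hI.mono_set (uIcc_subset_uIcc_right hx_mem)),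
    hfar, mul_add]
  exact add_le_add
    (mul_le_mul_of_nonneg_left hnear (inv_nonneg.2 (Gamma_pos_of_pos hα0).le)) le_rfl

theorem continuous_powDivGamma {p : ℝ} (hp : 0 ≤ p) : Continuous (powDivGamma p) :=
  (continuous_rpow_const hp).div_const _

theorem powDivGamma_nonneg {p t : ℝ} (hp : 0 ≤ p) (ht : 0 ≤ t) : 0 ≤ powDivGamma p t := by
  unfold powDivGamma; positivity

theorem powDivGamma_add_le {α x y : ℝ} (hα0 : 0 < α) (hα1 : α ≤ 1) (hx : 0 ≤ x) (hy : 0 ≤ y)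
    (n : ℕ) :
    powDivGamma (α * n) (x + y) ≤
      ∑ p ∈ antidiagonal n, powDivGamma (α * p.1) x * powDivGamma (α * p.2) y := by
  induction n generalizing y with
  | zero => simp [powDivGamma]
  | succ n ih =>
    have hstep : ∀ (k : ℕ) {t : ℝ}, 0 ≤ t →
        powDivGamma (α * (k + 1 : ℕ)) t = riemannLiouville α (powDivGamma (α * k)) t := by
      intro k t ht
      rw [riemannLiouville_powDivGamma hα0 (by positivity) ht]
      push_cast
      ring_nf
    have hcont : ∀ k : ℕ, Continuous (powDivGamma (α * k)) := fun k =>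
      continuous_powDivGamma (by positivity)
    calc powDivGamma (α * (n + 1 : ℕ)) (x + y)
        = riemannLiouville α (powDivGamma (α * n)) (x + y) := hstep n (by positivity)
      _ ≤ riemannLiouville α (powDivGamma (α * n)) x +
            riemannLiouville α (fun v => powDivGamma (α * n) (x + v)) y :=
          riemannLiouville_add_le hα0 hα1 hx hy (hcont n).continuousOn
            fun u hu => powDivGamma_nonneg (by positivity) hu.1
      _ ≤ riemannLiouville α (powDivGamma (α * n)) x +
            riemannLiouville α (fun v => ∑ p ∈ antidiagonal n,
              powDivGamma (α * p.1) x * powDivGamma (α * p.2) v) y := by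
          gcongr
          exact riemannLiouville_mono hα0 hy
            ((hcont n).comp (continuous_const_add x)).continuousOn (by fun_prop)
            fun v hv => ih hv.1
      _ = powDivGamma (α * (n + 1 : ℕ)) x + ∑ p ∈ antidiagonal n,
            powDivGamma (α * p.1) x * powDivGamma (α * (p.2 + 1 : ℕ)) y := by
          rw [riemannLiouville_sum_mul hα0 _ _ fun p _ => (hcont p.2).continuousOn, hstep n hx]
          refine congrArg _ (Finset.sum_congr rfl fun p _ => ?_)
          rw [hstep p.2 hy]
      _ = ∑ p ∈ antidiagonal (n + 1), powDivGamma (α * p.1) x * powDivGamma (α * p.2) y := by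
          rw [Finset.Nat.sum_antidiagonal_succ']
          simp [powDivGamma]

theorem rpow_mul_exp_neg_le_Gamma {p t : ℝ} (hp : 0 ≤ p) (ht : 0 ≤ t) :
    t ^ p * exp (-t) ≤ Gamma (p + 1) := by
  have hint : IntegrableOn (fun x => exp (-x) * x ^ p) (Ioi 0) := by
    simpa using GammaIntegral_convergent (by linarith : 0 < p + 1)
  calc t ^ p * exp (-t) = ∫ x in Ioi t, t ^ p * exp (-x) := by
        rw [integral_const_mul, integral_exp_neg_Ioi]
    _ ≤ ∫ x in Ioi t, exp (-x) * x ^ p :=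
        setIntegral_mono_on ((integrableOn_exp_neg_Ioi t).const_mul _)
          (hint.mono_set (Ioi_subset_Ioi ht)) measurableSet_Ioi fun x hx => by
          rw [mul_comm]
          exact mul_le_mul_of_nonneg_left (rpow_le_rpow ht (le_of_lt hx) hp) (exp_pos _).le
    _ ≤ ∫ x in Ioi 0, exp (-x) * x ^ p :=
        setIntegral_mono_set hint
          (ae_restrict_of_forall_mem measurableSet_Ioi fun x hx =>
            mul_nonneg (exp_pos _).le (rpow_nonneg (le_of_lt hx) _))
          (Ioi_subset_Ioi ht).eventuallyLE
    _ = Gamma (p + 1) := by rw [Gamma_eq_integral (by linarith), add_sub_cancel_right]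

theorem summable_mittagLeffler_series {α : ℝ} (hα : 0 < α) (w : ℝ) :
    Summable fun k : ℕ => w ^ k / Gamma (α * k + 1) := by
  -- `Γ(αk + 1) ≥ s ^ (αk) e^(-s) = (2|w| + 1) ^ k e^(-s)` gives a geometric majorant.
  set s := (2 * |w| + 1) ^ α⁻¹
  have hs : 0 ≤ s := by positivity
  have hsα : ∀ k : ℕ, s ^ (α * k) = (2 * |w| + 1) ^ k := fun k => by
    rw [← rpow_mul (by positivity), inv_mul_cancel_left₀ hα.ne', rpow_natCast]
  have hratio : |w| / (2 * |w| + 1) < 1 := by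
    rw [div_lt_one (by positivity)]
    linarith [abs_nonneg w]
  refine Summable.of_norm_bounded
    ((summable_geometric_of_lt_one (by positivity) hratio).mul_left (exp s)) fun k => ?_
  have hΓ := rpow_mul_exp_neg_le_Gamma (by positivity : 0 ≤ α * k) hs
  rw [hsα] at hΓ
  rw [norm_div, norm_pow, Real.norm_eq_abs, Real.norm_of_nonneg (by positivity), div_pow,
    mul_div_assoc']
  calc |w| ^ k / Gamma (α * k + 1) ≤ |w| ^ k / ((2 * |w| + 1) ^ k * exp (-s)) :=
        div_le_div_of_nonneg_left (by positivity) (by positivity) hΓ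
    _ = exp s * |w| ^ k / (2 * |w| + 1) ^ k := by
        rw [exp_neg]
        field_simp

theorem powDivGamma_mul_natCast {α t : ℝ} (ht : 0 ≤ t) (k : ℕ) :
    powDivGamma (α * k) t = (t ^ α) ^ k / Gamma (α * k + 1) := by
  rw [powDivGamma, rpow_mul ht, rpow_natCast]

theorem mittagLeffler_rpow_eq_tsum {α t : ℝ} (ht : 0 ≤ t) :
    mittagLeffler α (t ^ α) = ∑' k : ℕ, powDivGamma (α * k) t := by
  simp only [mittagLeffler, powDivGamma_mul_natCast ht]

theorem summable_norm_powDivGamma_mul_natCast {α t : ℝ} (hα : 0 < α) (ht : 0 ≤ t) :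
    Summable fun k : ℕ => ‖powDivGamma (α * k) t‖ := by
  simp only [powDivGamma_mul_natCast ht]
  exact (summable_mittagLeffler_series hα _).norm

theorem mittagLeffler_subadd (α x y : ℝ) (hα0 : 0 < α) (hα1 : α < 1)
    (hx : 0 ≤ x) (hy : 0 ≤ y) :
    mittagLeffler α ((x + y) ^ α) ≤ mittagLeffler α (x ^ α) * mittagLeffler α (y ^ α) := by
  have hsx := summable_norm_powDivGamma_mul_natCast hα0 hx
  have hsy := summable_norm_powDivGamma_mul_natCast hα0 hy
  have hsxy := summable_norm_powDivGamma_mul_natCast hα0 (add_nonneg hx hy)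
  have hcauchy := summable_sum_mul_antidiagonal_of_summable_norm' hsx hsx.of_norm hsy hsy.of_norm
  rw [mittagLeffler_rpow_eq_tsum hx, mittagLeffler_rpow_eq_tsum hy,
    tsum_mul_tsum_eq_tsum_sum_antidiagonal_of_summable_norm hsx hsy,
    mittagLeffler_rpow_eq_tsum (add_nonneg hx hy)]
  exact Summable.tsum_le_tsum (powDivGamma_add_le hα0 hα1.le hx hy) hsxy.of_norm hcauchy
end

section
/- For α > 1 and all x, y ≥ 0, the Mittag-Leffler function satisfies E_α((x+y)^α) ≥ E_α(x^α) · E_α(y^α). -/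
open Real MeasureTheory Finset
open scoped Nat

theorem integral_rpow_mul_sub_rpow {a b x : ℝ} (ha : 0 < a) (hb : 0 < b) (hx : 0 < x) :
    ∫ s in (0 : ℝ)..x, s ^ (a - 1) * (x - s) ^ (b - 1) =
      x ^ (a + b - 1) * (Gamma a * Gamma b / Gamma (a + b)) := by
  have hbeta : Complex.betaIntegral a b = ((Gamma a * Gamma b / Gamma (a + b) : ℝ) : ℂ) := by
    have hΓ : ((Gamma (a + b) : ℝ) : ℂ) ≠ 0 :=
      Complex.ofReal_ne_zero.mpr (Gamma_pos_of_pos (add_pos ha hb)).ne'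
    rw [Complex.ofReal_div, eq_div_iff hΓ, Complex.ofReal_mul, ← Complex.Gamma_ofReal,
      ← Complex.Gamma_ofReal, ← Complex.Gamma_ofReal, Complex.ofReal_add, mul_comm,
      Complex.Gamma_mul_Gamma_eq_betaIntegral (by simpa using ha) (by simpa using hb)]
  apply Complex.ofReal_injective
  rw [← intervalIntegral.integral_ofReal, Complex.ofReal_mul, Complex.ofReal_cpow hx.le, ← hbeta,
    Complex.ofReal_sub, Complex.ofReal_add, Complex.ofReal_one,
    ← Complex.betaIntegral_scaled _ _ hx]
  refine intervalIntegral.integral_congr fun s hs => ?_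
  rw [Set.uIcc_of_le hx.le] at hs
  rw [Complex.ofReal_mul, Complex.ofReal_cpow hs.1, Complex.ofReal_cpow (sub_nonneg.mpr hs.2)]
  push_cast
  ring_nf

noncomputable def rpowDivGamma (a x : ℝ) : ℝ := x ^ a / Gamma (a + 1)

noncomputable def riemannLiouvilleIntegral (β : ℝ) (g : ℝ → ℝ) (x : ℝ) : ℝ :=
  (Gamma β)⁻¹ * ∫ s in (0 : ℝ)..x, (x - s) ^ (β - 1) * g s

section rpowDivGamma

variable {a x : ℝ}

@[simp]
theorem rpowDivGamma_zero_left (x : ℝ) : rpowDivGamma 0 x = 1 := by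
  simp [rpowDivGamma]

theorem rpowDivGamma_nonneg (ha : 0 ≤ a) (hx : 0 ≤ x) : 0 ≤ rpowDivGamma a x :=
  div_nonneg (rpow_nonneg hx a) (Gamma_nonneg_of_nonneg (by linarith))

theorem continuous_rpowDivGamma (ha : 0 ≤ a) : Continuous (rpowDivGamma a) :=
  (continuous_rpow_const ha).div_const _

end rpowDivGamma

section riemannLiouvilleIntegral

variable {β x : ℝ} {g h : ℝ → ℝ}

theorem intervalIntegrable_rpow_sub_mul_s1 (hβ : 1 ≤ β) (hg : Continuous g) (x a b : ℝ) :
    IntervalIntegrable (fun s => (x - s) ^ (β - 1) * g s) volume a b :=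
  (((continuous_rpow_const (sub_nonneg.mpr hβ)).comp (continuous_sub_left x)).mul
    hg).intervalIntegrable a b

theorem riemannLiouvilleIntegral_mul_const (β : ℝ) (g : ℝ → ℝ) (c x : ℝ) :
    riemannLiouvilleIntegral β (fun s => g s * c) x = riemannLiouvilleIntegral β g x * c := by
  simp only [riemannLiouvilleIntegral, ← mul_assoc, intervalIntegral.integral_mul_const]

theorem riemannLiouvilleIntegral_finsetSum {ι : Type*} (s : Finset ι) {g : ι → ℝ → ℝ}
    (hβ : 1 ≤ β) (hg : ∀ i ∈ s, Continuous (g i)) :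
    riemannLiouvilleIntegral β (fun t => ∑ i ∈ s, g i t) x =
      ∑ i ∈ s, riemannLiouvilleIntegral β (g i) x := by
  simp only [riemannLiouvilleIntegral, Finset.mul_sum]
  rw [← Finset.mul_sum, ← intervalIntegral.integral_finsetSum
    fun i hi => intervalIntegrable_rpow_sub_mul_s1 hβ (hg i hi) x 0 x]

theorem riemannLiouvilleIntegral_mono (hβ : 1 ≤ β) (hx : 0 ≤ x) (hg : Continuous g)
    (hh : Continuous h) (hgh : ∀ s ∈ Set.Icc 0 x, g s ≤ h s) :
    riemannLiouvilleIntegral β g x ≤ riemannLiouvilleIntegral β h x := by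
  refine mul_le_mul_of_nonneg_left ?_ (inv_nonneg.mpr (Gamma_nonneg_of_nonneg (by linarith)))
  refine intervalIntegral.integral_mono_on hx (intervalIntegrable_rpow_sub_mul_s1 hβ hg x 0 x)
    (intervalIntegrable_rpow_sub_mul_s1 hβ hh x 0 x) fun s hs => ?_
  exact mul_le_mul_of_nonneg_left (hgh s hs) (rpow_nonneg (sub_nonneg.mpr hs.2) _)

theorem riemannLiouvilleIntegral_rpowDivGamma {a : ℝ} (ha : 0 ≤ a) (hβ : 0 < β) (hx : 0 ≤ x) :
    riemannLiouvilleIntegral β (rpowDivGamma a) x = rpowDivGamma (a + β) x := by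
  rcases hx.eq_or_lt with rfl | hx
  · simp [riemannLiouvilleIntegral, rpowDivGamma, zero_rpow (by linarith : a + β ≠ 0)]
  have hbeta := integral_rpow_mul_sub_rpow (by linarith : 0 < a + 1) hβ hx
  have hΓa := Gamma_pos_of_pos (by linarith : 0 < a + 1)
  have hΓβ := Gamma_pos_of_pos hβ
  rw [add_sub_cancel_right, add_right_comm, add_sub_cancel_right] at hbeta
  simp only [riemannLiouvilleIntegral, rpowDivGamma, div_eq_mul_inv, ← mul_assoc]
  rw [intervalIntegral.integral_congr (g := fun s => s ^ a * (x - s) ^ (β - 1) *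
    (Gamma (a + 1))⁻¹) fun s _ => by ring,
    intervalIntegral.integral_mul_const, hbeta]
  field_simp

theorem riemannLiouvilleIntegral_comp_add_right_add_le (hβ : 1 ≤ β) (hg : Continuous g)
    {y : ℝ} (hx : 0 ≤ x) (hy : 0 ≤ y) (hg₀ : ∀ t ∈ Set.Icc 0 y, 0 ≤ g t) :
    riemannLiouvilleIntegral β (fun s => g (s + y)) x + riemannLiouvilleIntegral β g y ≤
      riemannLiouvilleIntegral β g (x + y) := by
  have hshift : ∫ s in (0 : ℝ)..x, (x - s) ^ (β - 1) * g (s + y) =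
      ∫ t in y..x + y, (x + y - t) ^ (β - 1) * g t := by
    have := intervalIntegral.integral_comp_add_right (fun t => (x + y - t) ^ (β - 1) * g t) y
      (a := 0) (b := x)
    simpa only [zero_add, add_sub_add_right_eq_sub] using this
  have hkernel : ∫ t in (0 : ℝ)..y, (y - t) ^ (β - 1) * g t ≤
      ∫ t in (0 : ℝ)..y, (x + y - t) ^ (β - 1) * g t :=
    intervalIntegral.integral_mono_on hy (intervalIntegrable_rpow_sub_mul_s1 hβ hg y 0 y)
      (intervalIntegrable_rpow_sub_mul_s1 hβ hg (x + y) 0 y) fun t ht =>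
        mul_le_mul_of_nonneg_right
          (rpow_le_rpow (by linarith [ht.2]) (by linarith) (by linarith)) (hg₀ t ht)
  simp only [riemannLiouvilleIntegral]
  rw [← mul_add, hshift, ← intervalIntegral.integral_add_adjacent_intervals
    (intervalIntegrable_rpow_sub_mul_s1 hβ hg (x + y) 0 y)
    (intervalIntegrable_rpow_sub_mul_s1 hβ hg (x + y) y (x + y)), add_comm]
  exact mul_le_mul_of_nonneg_left (by linarith)
    (inv_nonneg.mpr (Gamma_nonneg_of_nonneg (by linarith)))

end riemannLiouvilleIntegral

theorem sum_antidiagonal_rpowDivGamma_mul_le {α y : ℝ} (hα : 1 ≤ α) (hy : 0 ≤ y) (n : ℕ) {x : ℝ}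
    (hx : 0 ≤ x) :
    ∑ p ∈ antidiagonal n, rpowDivGamma (α * p.1) x * rpowDivGamma (α * p.2) y ≤
      rpowDivGamma (α * n) (x + y) := by
  have hα₀ : 0 < α := by linarith
  have hαk (k : ℕ) : 0 ≤ α * k := by positivity
  induction n generalizing x with
  | zero => simp
  | succ n ih =>
    have hstep (p : ℕ × ℕ) : rpowDivGamma (α * ↑(p.1 + 1)) x * rpowDivGamma (α * p.2) y =
        riemannLiouvilleIntegral α (fun s => rpowDivGamma (α * p.1) s * rpowDivGamma (α * p.2) y)
          x := by
      rw [riemannLiouvilleIntegral_mul_const, riemannLiouvilleIntegral_rpowDivGamma (hαk _) hα₀ hx]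
      push_cast
      ring_nf
    have hsucc (z : ℝ) (hz : 0 ≤ z) : rpowDivGamma (α * ↑(n + 1)) z =
        riemannLiouvilleIntegral α (rpowDivGamma (α * n)) z := by
      rw [riemannLiouvilleIntegral_rpowDivGamma (hαk _) hα₀ hz]
      push_cast
      ring_nf
    calc ∑ p ∈ antidiagonal (n + 1), rpowDivGamma (α * p.1) x * rpowDivGamma (α * p.2) y
        = riemannLiouvilleIntegral α (fun s => ∑ p ∈ antidiagonal n,
              rpowDivGamma (α * p.1) s * rpowDivGamma (α * p.2) y) x +
            riemannLiouvilleIntegral α (rpowDivGamma (α * n)) y := by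
          rw [Nat.sum_antidiagonal_succ, riemannLiouvilleIntegral_finsetSum _ hα
            fun p _ => (continuous_rpowDivGamma (hαk _)).mul_const _, ← hsucc y hy,
            Finset.sum_congr rfl fun p _ => hstep p]
          simp [add_comm]
      _ ≤ riemannLiouvilleIntegral α (fun s => rpowDivGamma (α * n) (s + y)) x +
            riemannLiouvilleIntegral α (rpowDivGamma (α * n)) y := by
          gcongr
          refine riemannLiouvilleIntegral_mono hα hx ?_ ?_ fun s hs => ih hs.1
          · exact continuous_finsetSum _ fun p _ =>
              (continuous_rpowDivGamma (hαk _)).mul_const _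
          · exact (continuous_rpowDivGamma (hαk _)).comp (continuous_add_const y)
      _ ≤ riemannLiouvilleIntegral α (rpowDivGamma (α * n)) (x + y) :=
          riemannLiouvilleIntegral_comp_add_right_add_le hα (continuous_rpowDivGamma (hαk _)) hx hy
            fun t ht => rpowDivGamma_nonneg (hαk _) ht.1
      _ = rpowDivGamma (α * ↑(n + 1)) (x + y) := (hsucc _ (by linarith)).symm

theorem rpow_pow_div_Gamma {x : ℝ} (hx : 0 ≤ x) (α : ℝ) (k : ℕ) :
    (x ^ α) ^ k / Gamma (α * k + 1) = rpowDivGamma (α * k) x := by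
  rw [rpowDivGamma, ← rpow_natCast, ← rpow_mul hx]

theorem factorial_le_Gamma_mul_add_one {α : ℝ} (hα : 1 ≤ α) (k : ℕ) :
    (k ! : ℝ) ≤ Gamma (α * k + 1) := by
  rw [← Gamma_nat_eq_factorial]
  rcases k.eq_zero_or_pos with rfl | hk
  · simp
  have hk₁ : (1 : ℝ) ≤ k := by exact_mod_cast hk
  exact Gamma_strictMonoOn_Ici.monotoneOn (Set.mem_Ici.mpr (by linarith))
    (Set.mem_Ici.mpr (by nlinarith)) (by nlinarith)

theorem summable_rpowDivGamma {α x : ℝ} (hα : 1 ≤ α) (hx : 0 ≤ x) :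
    Summable fun k : ℕ => rpowDivGamma (α * k) x := by
  simp_rw [← rpow_pow_div_Gamma hx]
  refine (Real.summable_pow_div_factorial (x ^ α)).of_nonneg_of_le
    (fun k => div_nonneg (pow_nonneg (rpow_nonneg hx α) k) (Gamma_nonneg_of_nonneg (by positivity)))
    fun k => div_le_div_of_nonneg_left (pow_nonneg (rpow_nonneg hx α) k)
      (by exact_mod_cast k.factorial_pos) (factorial_le_Gamma_mul_add_one hα k)

theorem mittagLeffler_rpow (α : ℝ) {x : ℝ} (hx : 0 ≤ x) :
    mittagLeffler α (x ^ α) = ∑' k : ℕ, rpowDivGamma (α * k) x := by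
  simp only [mittagLeffler, rpow_pow_div_Gamma hx]

theorem mittagLeffler_superadd (α x y : ℝ) (hα : 1 < α)
    (hx : 0 ≤ x) (hy : 0 ≤ y) :
    mittagLeffler α (x ^ α) * mittagLeffler α (y ^ α) ≤ mittagLeffler α ((x + y) ^ α) := by
  have hX := (summable_rpowDivGamma hα.le hx).norm
  have hY := (summable_rpowDivGamma hα.le hy).norm
  rw [mittagLeffler_rpow α hx, mittagLeffler_rpow α hy, mittagLeffler_rpow α (add_nonneg hx hy),
    tsum_mul_tsum_eq_tsum_sum_antidiagonal_of_summable_norm hX hY]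
  exact (summable_norm_sum_mul_antidiagonal_of_summable_norm hX hY).of_norm.tsum_le_tsum
    (fun n => sum_antidiagonal_rpowDivGamma_mul_le hα.le hy n hx)
    (summable_rpowDivGamma hα.le (add_nonneg hx hy))
end

section
/- For every natural number k ≥ 1, every α > 1, and all x, y > 0, we have ∑_{j=0}^k C(αk, αj) x^{αj} y^{α(k-j)} < (x+y)^{αk}, where C(a,b) = Γ(a+1)/(Γ(b+1)Γ(a-b+1)). -/
/-!
Each term is compared with the matching term of `(x + y) ^ k * (x + y) ^ ((α - 1) * k)` expanded
by the binomial theorem; the term `j = 0` gives the strict inequality. For `K = J + B`, weighted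
AM–GM gives `x ^ J * y ^ B ≤ J ^ J * B ^ B / K ^ K * (x + y) ^ K`, so it remains to show
`C(αK, αJ) * (J ^ J * B ^ B / K ^ K) ^ (α - 1) ≤ C(K, J)`. In logarithms this is
subadditivity of `m ↦ log Γ(αm + 1) - log Γ(m + 1) - (α - 1) m log m`, which holds because its
quotient by `m` decreases. That is checked on the Euler–Gauss approximations of `Γ`: there the
derivative in `α` of the quotient is `log m + ∑ i < N, (α m + 1 + i)⁻¹`, increasing in `m` by a
telescoping bound.
-/

noncomputable def genBinom (a b : ℝ) : ℝ :=
  Real.Gamma (a + 1) / (Real.Gamma (b + 1) * Real.Gamma (a - b + 1))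

open Real Finset Filter Topology

lemma monotoneOn_Ioi_of_hasDerivAt_nonneg {f f' : ℝ → ℝ} {c : ℝ}
    (hf : ∀ x ∈ Set.Ioi c, HasDerivAt f (f' x) x) (hf' : ∀ x ∈ Set.Ioi c, 0 ≤ f' x) :
    MonotoneOn f (Set.Ioi c) :=
  monotoneOn_of_hasDerivWithinAt_nonneg (convex_Ioi c)
    (fun x hx => (hf x hx).continuousAt.continuousWithinAt)
    (fun x hx => by rw [interior_Ioi] at hx ⊢; exact (hf x hx).hasDerivWithinAt)
    (fun x hx => hf' x (by rwa [interior_Ioi] at hx))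

lemma sum_range_inv_sq_le_inv {x : ℝ} (hx : 0 < x) (N : ℕ) :
    ∑ i ∈ range N, ((x + 1 + i) ^ 2)⁻¹ ≤ x⁻¹ := by
  calc ∑ i ∈ range N, ((x + 1 + i) ^ 2)⁻¹
      ≤ ∑ i ∈ range N, ((x + i)⁻¹ - (x + (i + 1 : ℕ))⁻¹) := by
        gcongr with i
        have hi : 0 < x + i := by positivity
        rw [Nat.cast_succ, inv_sub_inv hi.ne' (by positivity), ← add_assoc, add_right_comm,
          add_sub_cancel_left, one_div, sq]
        exact inv_anti₀ (by positivity) (by nlinarith)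
    _ = x⁻¹ - (x + N)⁻¹ := by rw [sum_range_sub' (fun i : ℕ => (x + i)⁻¹)]; simp
    _ ≤ x⁻¹ := sub_le_self _ (by positivity)

lemma monotoneOn_log_add_sum_inv {s : ℝ} (hs : 0 < s) (N : ℕ) :
    MonotoneOn (fun m => log m + ∑ i ∈ range N, (s * m + 1 + i)⁻¹) (Set.Ioi 0) := by
  refine monotoneOn_Ioi_of_hasDerivAt_nonneg
    (f' := fun m => m⁻¹ + ∑ i ∈ range N, -s / (s * m + 1 + i) ^ 2) (fun m hm => ?_)
    (fun m hm => ?_) <;> have hm : 0 < m := hm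
  · refine (hasDerivAt_log hm.ne').add (HasDerivAt.fun_sum fun i _ => ?_)
    have hlin := ((hasDerivAt_id m).const_mul s).add_const (1 + i : ℝ)
    simpa only [id, mul_one, add_assoc, Pi.inv_def] using hlin.inv (by positivity)
  · have hsum : ∑ i ∈ range N, s / (s * m + 1 + i) ^ 2 ≤ m⁻¹ := calc
      _ = s * ∑ i ∈ range N, ((s * m + 1 + i) ^ 2)⁻¹ := by
        simp only [mul_sum, div_eq_mul_inv]
      _ ≤ s * (s * m)⁻¹ := by gcongr; exact sum_range_inv_sq_le_inv (by positivity) N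
      _ = m⁻¹ := by field_simp
    simp only [neg_div, sum_neg_distrib]
    linarith

/-- `(a - 1) * log n - gammaRatioPartial (n + 1) a m` is what `gammaRatioRate a m` becomes when
both Gamma values are replaced by their Euler–Gauss approximations `BohrMollerup.logGammaSeq`. -/
noncomputable def gammaRatioPartial (N : ℕ) (a m : ℝ) : ℝ :=
  (a - 1) * log m + (∑ i ∈ range N, (log (a * m + 1 + i) - log (m + 1 + i))) / m

lemma hasDerivAt_gammaRatioPartial (N : ℕ) {a m : ℝ} (ha : 0 < a) (hm : 0 < m) :
    HasDerivAt (fun a => gammaRatioPartial N a m)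
      (log m + ∑ i ∈ range N, (a * m + 1 + i)⁻¹) a := by
  have hsum := HasDerivAt.fun_sum (u := range N) fun i _ =>
    ((((hasDerivAt_id a).mul_const m).add_const 1).add_const (i : ℝ)).log
      (by simp only [id]; positivity) |>.sub_const (log (m + 1 + i))
  refine ((((hasDerivAt_id a).sub_const 1).mul_const (log m)).add (hsum.div_const m)).congr_deriv ?_
  simp only [id, one_mul, sum_div]
  congr 1
  refine sum_congr rfl fun i _ => ?_
  field_simp

lemma monotoneOn_gammaRatioPartial (N : ℕ) {a : ℝ} (ha : 1 ≤ a) :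
    MonotoneOn (gammaRatioPartial N a) (Set.Ioi 0) := by
  intro m₁ hm₁ m₂ hm₂ hm
  have hdiff : MonotoneOn (fun b => gammaRatioPartial N b m₂ - gammaRatioPartial N b m₁)
      (Set.Ioi 0) :=
    monotoneOn_Ioi_of_hasDerivAt_nonneg
      (fun b hb => (hasDerivAt_gammaRatioPartial N hb hm₂).sub
        (hasDerivAt_gammaRatioPartial N hb hm₁))
      (fun b hb => sub_nonneg.2 (monotoneOn_log_add_sum_inv hb N hm₁ hm₂ hm))
  have := hdiff (Set.mem_Ioi.2 one_pos) (Set.mem_Ioi.2 (one_pos.trans_le ha)) ha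
  simpa [gammaRatioPartial] using this

noncomputable def gammaRatioRate (a m : ℝ) : ℝ :=
  (log (Gamma (a * m + 1)) - log (Gamma (m + 1))) / m - (a - 1) * log m

lemma tendsto_gammaRatioRate {a m : ℝ} (ha : 0 ≤ a) (hm : 0 < m) :
    Tendsto (fun n : ℕ => (a - 1) * log n - gammaRatioPartial (n + 1) a m) atTop
      (𝓝 (gammaRatioRate a m)) := by
  refine ((((BohrMollerup.tendsto_log_gamma (x := a * m + 1) (by positivity)).sub
    (BohrMollerup.tendsto_log_gamma (x := m + 1) (by positivity))).div_const m).sub_const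
    ((a - 1) * log m)).congr fun n => ?_
  simp only [BohrMollerup.logGammaSeq, gammaRatioPartial, sum_sub_distrib]
  field_simp
  ring

lemma antitoneOn_gammaRatioRate {a : ℝ} (ha : 1 ≤ a) :
    AntitoneOn (gammaRatioRate a) (Set.Ioi 0) :=
  fun _ hm₁ _ hm₂ hm => le_of_tendsto_of_tendsto' (tendsto_gammaRatioRate (by linarith) hm₂)
    (tendsto_gammaRatioRate (by linarith) hm₁)
    fun n => sub_le_sub_left (monotoneOn_gammaRatioPartial (n + 1) ha hm₁ hm₂ hm) _

lemma mul_gammaRatioRate (a : ℝ) {m : ℝ} (hm : m ≠ 0) :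
    m * gammaRatioRate a m =
      log (Gamma (a * m + 1)) - log (Gamma (m + 1)) - (a - 1) * (m * log m) := by
  rw [gammaRatioRate]
  field_simp

lemma mul_gammaRatioRate_add_le {a J B : ℝ} (ha : 1 ≤ a) (hJ : 0 < J) (hB : 0 < B) :
    (J + B) * gammaRatioRate a (J + B) ≤ J * gammaRatioRate a J + B * gammaRatioRate a B := by
  have hK : (0 : ℝ) < J + B := by positivity
  have hJ' := antitoneOn_gammaRatioRate ha hJ hK (by linarith)
  have hB' := antitoneOn_gammaRatioRate ha hB hK (by linarith)
  nlinarith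

lemma genBinom_pos {a b : ℝ} (hb : 0 ≤ b) (hba : b ≤ a) : 0 < genBinom a b := by
  have := Gamma_pos_of_pos (by linarith : 0 < a + 1)
  have := Gamma_pos_of_pos (by linarith : 0 < b + 1)
  have := Gamma_pos_of_pos (by linarith : 0 < a - b + 1)
  unfold genBinom
  positivity

lemma log_genBinom {a b : ℝ} (hb : 0 ≤ b) (hba : b ≤ a) :
    log (genBinom a b) = log (Gamma (a + 1)) - log (Gamma (b + 1)) - log (Gamma (a - b + 1)) := by
  rw [genBinom, log_div (Gamma_pos_of_pos (by linarith)).ne' (by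
      have := Gamma_pos_of_pos (by linarith : 0 < b + 1)
      have := Gamma_pos_of_pos (by linarith : 0 < a - b + 1)
      positivity),
    log_mul (Gamma_pos_of_pos (by linarith)).ne' (Gamma_pos_of_pos (by linarith)).ne', sub_sub]

lemma genBinom_zero_right {a : ℝ} (ha : -1 < a) : genBinom a 0 = 1 := by
  rw [genBinom, zero_add, Gamma_one, one_mul, sub_zero,
    div_self (Gamma_pos_of_pos (by linarith)).ne']

lemma genBinom_self {a : ℝ} (ha : -1 < a) : genBinom a a = 1 := by
  rw [genBinom, sub_self, zero_add, Gamma_one, mul_one,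
    div_self (Gamma_pos_of_pos (by linarith)).ne']

lemma genBinom_natCast {n k : ℕ} (h : k ≤ n) : genBinom n k = n.choose k := by
  rw [genBinom, ← Nat.cast_sub h, Gamma_nat_eq_factorial, Gamma_nat_eq_factorial,
    Gamma_nat_eq_factorial, Nat.cast_choose ℝ h]

lemma genBinom_mul_le {a J B : ℝ} (ha : 1 ≤ a) (hJ : 0 < J) (hB : 0 < B) :
    genBinom (a * (J + B)) (a * J) * (J ^ J * B ^ B / (J + B) ^ (J + B)) ^ (a - 1) ≤
      genBinom (J + B) J := by
  have hK : 0 < J + B := by positivity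
  have hM : 0 < J ^ J * B ^ B / (J + B) ^ (J + B) := by positivity
  rw [← log_le_log_iff (mul_pos (genBinom_pos (by positivity) (by nlinarith)) (by positivity))
      (genBinom_pos hJ.le (by linarith)),
    log_mul (genBinom_pos (by positivity) (by nlinarith)).ne' (rpow_pos_of_pos hM _).ne',
    log_genBinom (by positivity) (by nlinarith), log_genBinom hJ.le (by linarith), log_rpow hM,
    log_div (by positivity) (by positivity), log_mul (by positivity) (by positivity),
    log_rpow hJ, log_rpow hB, log_rpow hK, show a * (J + B) - a * J = a * B by ring,
    show J + B - J = B by ring]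
  have := mul_gammaRatioRate_add_le ha hJ hB
  rw [mul_gammaRatioRate a hK.ne', mul_gammaRatioRate a hJ.ne', mul_gammaRatioRate a hB.ne'] at this
  linarith

lemma rpow_mul_rpow_le {x y J B : ℝ} (hx : 0 ≤ x) (hy : 0 ≤ y) (hJ : 0 < J) (hB : 0 < B) :
    x ^ J * y ^ B ≤ J ^ J * B ^ B / (J + B) ^ (J + B) * (x + y) ^ (J + B) := by
  set K := J + B
  have hK : 0 < K := by positivity
  have hamgm := geom_mean_le_arith_mean2_weighted (div_nonneg hJ.le hK.le) (div_nonneg hB.le hK.le)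
    (by positivity : 0 ≤ K * x / J) (by positivity : 0 ≤ K * y / B)
    (by rw [← add_div, div_self hK.ne'])
  have hsum : J / K * (K * x / J) + B / K * (K * y / B) = x + y := by field_simp
  rw [hsum] at hamgm
  have hpow := rpow_le_rpow (by positivity) hamgm hK.le
  rw [mul_rpow (by positivity) (by positivity), ← rpow_mul (by positivity),
    ← rpow_mul (by positivity),
    div_mul_cancel₀ _ hK.ne', div_mul_cancel₀ _ hK.ne', div_rpow (by positivity) hJ.le,
    div_rpow (by positivity) hB.le, mul_rpow hK.le hx, mul_rpow hK.le hy] at hpow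
  have hKK : K ^ K = K ^ J * K ^ B := rpow_add hK J B
  rw [div_mul_eq_mul_div, le_div_iff₀ (by positivity), hKK]
  calc x ^ J * y ^ B * (K ^ J * K ^ B)
      = K ^ J * x ^ J / J ^ J * (K ^ B * y ^ B / B ^ B) * (J ^ J * B ^ B) := by field_simp
    _ ≤ (x + y) ^ K * (J ^ J * B ^ B) := by gcongr
    _ = J ^ J * B ^ B * (x + y) ^ K := by ring

lemma genBinom_mul_rpow_mul_rpow_le {a x y J B : ℝ} (ha : 1 ≤ a) (hx : 0 < x) (hy : 0 < y)
    (hJ : 0 < J) (hB : 0 < B) :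
    genBinom (a * (J + B)) (a * J) * x ^ (a * J) * y ^ (a * B) ≤
      genBinom (J + B) J * (x ^ J * y ^ B) * (x + y) ^ ((a - 1) * (J + B)) := by
  set M := J ^ J * B ^ B / (J + B) ^ (J + B)
  set P := x ^ J * y ^ B
  have hP : 0 < P := by positivity
  have hC : 0 < genBinom (a * (J + B)) (a * J) := genBinom_pos (by positivity) (by nlinarith)
  have hPa : x ^ (a * J) * y ^ (a * B) = P * P ^ (a - 1) := by
    rw [← rpow_one_add' hP.le (by linarith), add_sub_cancel,
      mul_rpow (by positivity) (by positivity),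
      ← rpow_mul hx.le, ← rpow_mul hy.le, mul_comm J, mul_comm B]
  calc genBinom (a * (J + B)) (a * J) * x ^ (a * J) * y ^ (a * B)
      = genBinom (a * (J + B)) (a * J) * (P * P ^ (a - 1)) := by rw [mul_assoc, hPa]
    _ ≤ genBinom (a * (J + B)) (a * J) * (P * (M * (x + y) ^ (J + B)) ^ (a - 1)) := by
        gcongr
        exact rpow_mul_rpow_le hx.le hy.le hJ hB
    _ = genBinom (a * (J + B)) (a * J) * M ^ (a - 1) * P * (x + y) ^ ((a - 1) * (J + B)) := by
        rw [mul_rpow (by positivity) (by positivity), ← rpow_mul (by positivity),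
          mul_comm (J + B)]
        ring
    _ ≤ genBinom (J + B) J * P * (x + y) ^ ((a - 1) * (J + B)) := by
        gcongr
        exact genBinom_mul_le ha hJ hB

lemma rpow_mul_lt_rpow_mul_add_rpow {a K x y : ℝ} (ha : 1 < a) (hK : 0 < K) (hx : 0 < x)
    (hy : 0 < y) : y ^ (a * K) < y ^ K * (x + y) ^ ((a - 1) * K) := by
  rw [show a * K = K + (a - 1) * K by ring, rpow_add hy]
  gcongr
  nlinarith

lemma genBinom_term_le {α x y : ℝ} (hα : 1 < α) (hx : 0 < x) (hy : 0 < y) {k j : ℕ}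
    (hk : 0 < k) (hjk : j ≤ k) :
    genBinom (α * k) (α * j) * x ^ (α * j) * y ^ (α * (k - j : ℕ)) ≤
      k.choose j * (x ^ (j : ℝ) * y ^ ((k - j : ℕ) : ℝ)) * (x + y) ^ ((α - 1) * k) := by
  obtain ⟨b, rfl⟩ := Nat.exists_eq_add_of_le hjk
  rw [Nat.add_sub_cancel_left]
  rcases Nat.eq_zero_or_pos j with rfl | hj
  · simpa [genBinom_zero_right (a := α * b) (neg_one_lt_zero.trans_le (by positivity))] using
      (rpow_mul_lt_rpow_mul_add_rpow hα (Nat.cast_pos.2 (by simpa using hk)) hx hy).le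
  rcases Nat.eq_zero_or_pos b with rfl | hb
  · simpa [genBinom_self (a := α * j) (neg_one_lt_zero.trans_le (by positivity)),
      add_comm y] using
      (rpow_mul_lt_rpow_mul_add_rpow hα (by positivity : (0 : ℝ) < j) hy hx).le
  push_cast
  rw [← genBinom_natCast (Nat.le_add_right j b)]
  push_cast
  exact genBinom_mul_rpow_mul_rpow_le hα.le hx hy (by positivity) (by positivity)

theorem binom_ineq_alpha_gt_one (k : ℕ) (hk : 1 ≤ k) (α : ℝ) (hα : 1 < α)
    (x y : ℝ) (hx : 0 < x) (hy : 0 < y) :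
    ∑ j ∈ Finset.range (k + 1),
        genBinom (α * k) (α * j) * x ^ (α * j) * y ^ (α * (k - j : ℕ)) <
      (x + y) ^ (α * k) := by
  have hk' : (0 : ℝ) < k := by exact_mod_cast hk
  calc ∑ j ∈ range (k + 1), genBinom (α * k) (α * j) * x ^ (α * j) * y ^ (α * (k - j : ℕ))
      < ∑ j ∈ range (k + 1),
          k.choose j * (x ^ (j : ℝ) * y ^ ((k - j : ℕ) : ℝ)) * (x + y) ^ ((α - 1) * k) := by
        refine sum_lt_sum (fun j hj => genBinom_term_le hα hx hy hk (mem_range_succ_iff.1 hj))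
          ⟨0, by simp, ?_⟩
        simpa [genBinom_zero_right (a := α * k) (neg_one_lt_zero.trans_le (by positivity))] using
          rpow_mul_lt_rpow_mul_add_rpow hα hk' hx hy
    _ = (x + y) ^ (k : ℝ) * (x + y) ^ ((α - 1) * k) := by
        simp_rw [← sum_mul, rpow_natCast, add_pow]
        refine congrArg (· * _) (sum_congr rfl fun j _ => by ring)
    _ = (x + y) ^ (α * k) := by
        rw [← rpow_add (by positivity)]
        ring_nf
end

section
/- For α > 1, the function x ↦ E_α(x) is log-concave on (0, ∞). -/
open Real Set Nat

lemma ConvexOn.map_add_sub_map_add_le {s : Set ℝ} {f : ℝ → ℝ} (hf : ConvexOn ℝ s f)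
    {a b t t' : ℝ} (ha : t + a ∈ s) (hb : t' + b ∈ s) (hab : a ≤ b) (htt' : t ≤ t') :
    f (t + b) - f (t + a) ≤ f (t' + b) - f (t' + a) := by
  rcases (show t + a ≤ t' + b by linarith).eq_or_lt with heq | hlt
  · have hb' : b = a := by linarith
    have ht' : t' = t := by linarith
    simp [hb', ht']
  -- `t + b` and `t' + a` are the two convex combinations of `t + a` and `t' + b` with weights
  -- `θ, 1 - θ` and `1 - θ, θ`.
  set θ := (t' - t) / (t' + b - (t + a))
  have hpos : 0 < t' + b - (t + a) := by linarith
  have hθ₀ : 0 ≤ θ := div_nonneg (by linarith) hpos.le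
  have hθ₁ : 0 ≤ 1 - θ := by
    rw [sub_nonneg, div_le_one hpos]; linarith
  have hθ : θ * (t' + b - (t + a)) = t' - t := div_mul_cancel₀ _ hpos.ne'
  have h₁ := hf.2 ha hb hθ₀ hθ₁ (by ring)
  have h₂ := hf.2 ha hb hθ₁ hθ₀ (by ring)
  rw [smul_eq_mul, smul_eq_mul, show θ * (t + a) + (1 - θ) * (t' + b) = t + b by linarith,
    smul_eq_mul, smul_eq_mul] at h₁
  rw [smul_eq_mul, smul_eq_mul, show (1 - θ) * (t + a) + θ * (t' + b) = t' + a by linarith,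
    smul_eq_mul, smul_eq_mul] at h₂
  linarith

lemma Real.antitoneOn_Gamma_add_div_Gamma_add {a b : ℝ} (ha : 0 < a) (hab : a ≤ b) :
    AntitoneOn (fun t => Gamma (t + a) / Gamma (t + b)) (Ici 0) := by
  intro t ht t' ht' htt'
  have hpos : ∀ {s c : ℝ}, s ∈ Ici 0 → 0 < c → 0 < s + c := fun hs hc => by
    rw [mem_Ici] at hs; positivity
  have hb : 0 < b := ha.trans_le hab
  have key := convexOn_log_Gamma.map_add_sub_map_add_le (hpos ht ha) (hpos ht' hb) hab htt'
  simp only [Function.comp_apply] at key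
  have hΓ : ∀ {s c : ℝ}, s ∈ Ici 0 → 0 < c → 0 < Gamma (s + c) := fun hs hc =>
    Gamma_pos_of_pos (hpos hs hc)
  rw [div_le_div_iff₀ (hΓ ht' hb) (hΓ ht hb), ← log_le_log_iff (mul_pos (hΓ ht' ha) (hΓ ht hb))
    (mul_pos (hΓ ht ha) (hΓ ht' hb)), log_mul (hΓ ht' ha).ne' (hΓ ht hb).ne',
    log_mul (hΓ ht ha).ne' (hΓ ht' hb).ne']
  linarith

lemma tsum_nonneg_of_add_swap_nonneg {ι : Type*} {f : ι × ι → ℝ}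
    (hf : ∀ p : ι × ι, 0 ≤ f p + f p.swap) : 0 ≤ ∑' p, f p := by
  by_cases hs : Summable f
  · have hswap : ∑' p : ι × ι, f p.swap = ∑' p, f p := (Equiv.prodComm ι ι).tsum_eq f
    have := tsum_nonneg (L := .unconditional _) hf
    rw [hs.tsum_add hs.prod_symm, hswap] at this
    linarith
  · exact (tsum_eq_zero_of_not_summable hs).ge

lemma pow_mul_pow_le_pow_mul_pow {x y : ℝ} (hx : 0 ≤ x) (hxy : x ≤ y) {m n : ℕ}
    (hmn : m ≤ n) : x ^ n * y ^ m ≤ x ^ m * y ^ n := by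
  obtain ⟨l, rfl⟩ := Nat.exists_eq_add_of_le hmn
  calc x ^ (m + l) * y ^ m = x ^ m * y ^ m * x ^ l := by ring
    _ ≤ x ^ m * y ^ m * y ^ l := by have := hx.trans hxy; gcongr
    _ = x ^ m * y ^ (m + l) := by ring

/-- Chebyshev's sum inequality in power-series form. -/
lemma tsum_mul_pow_mul_tsum_pow_le {a w : ℕ → ℝ} (ha : ∀ k, 0 ≤ a k) (hw : Antitone w)
    (hsum : ∀ x, Summable fun k => a k * x ^ k)
    (hsum' : ∀ x, Summable fun k => w k * a k * x ^ k) {x y : ℝ} (hx : 0 ≤ x) (hxy : x ≤ y) :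
    (∑' k, w k * a k * y ^ k) * ∑' k, a k * x ^ k ≤
      (∑' k, w k * a k * x ^ k) * ∑' k, a k * y ^ k := by
  rw [tsum_mul_tsum_of_summable_norm (hsum' y).norm (hsum x).norm,
    tsum_mul_tsum_of_summable_norm (hsum' x).norm (hsum y).norm,
    ← sub_nonneg, ← (summable_mul_of_summable_norm (hsum' x).norm (hsum y).norm).tsum_sub
      (summable_mul_of_summable_norm (hsum' y).norm (hsum x).norm)]
  refine tsum_nonneg_of_add_swap_nonneg fun ⟨m, n⟩ => ?_
  have hsym : w m * a m * x ^ m * (a n * y ^ n) - w m * a m * y ^ m * (a n * x ^ n) +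
      (w n * a n * x ^ n * (a m * y ^ m) - w n * a n * y ^ n * (a m * x ^ m)) =
      a m * a n * ((w m - w n) * (x ^ m * y ^ n - x ^ n * y ^ m)) := by ring
  simp only [Prod.swap_prod_mk]
  rw [hsym]
  refine mul_nonneg (mul_nonneg (ha m) (ha n)) ?_
  rcases le_total m n with hmn | hnm
  · exact mul_nonneg (sub_nonneg.2 (hw hmn))
      (sub_nonneg.2 (pow_mul_pow_le_pow_mul_pow hx hxy hmn))
  · exact mul_nonneg_of_nonpos_of_nonpos (sub_nonpos.2 (hw hnm))
      (sub_nonpos.2 (pow_mul_pow_le_pow_mul_pow hx hxy hnm))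

lemma hasDerivAt_tsum_mul_pow {a : ℕ → ℝ}
    (h : ∀ x, Summable fun k : ℕ => (k + 1) * a (k + 1) * x ^ k) (x : ℝ) :
    HasDerivAt (fun y => ∑' k, a k * y ^ k) (∑' k : ℕ, (k + 1) * a (k + 1) * x ^ k) x := by
  have hsum : ∀ r, Summable fun k : ℕ => (k : ℝ) * a k * r ^ (k - 1) := fun r => by
    rw [← summable_nat_add_iff 1]
    simpa using h r
  set R := |x| + 1
  have hbound : ∀ (k : ℕ), ∀ y ∈ Ioo (-R) R,
      ‖(k : ℝ) * a k * y ^ (k - 1)‖ ≤ ‖(k : ℝ) * a k * R ^ (k - 1)‖ := fun k y hy => by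
    have hyR : |y| ≤ |R| := by rw [abs_of_pos (by positivity : 0 < R)]; exact (abs_lt.2 hy).le
    simp only [norm_mul, norm_pow, Real.norm_eq_abs]
    gcongr
  have := hasDerivAt_tsum_of_isPreconnected (hsum R).norm isOpen_Ioo isPreconnected_Ioo
    (g := fun k y => a k * y ^ k) (g' := fun k y => (k : ℝ) * a k * y ^ (k - 1))
    (fun k y _ => by simpa [mul_comm, mul_assoc] using (hasDerivAt_pow k y).const_mul (a k))
    hbound (y₀ := 0) (abs_lt.1 (by simp [R]; positivity))
    (summable_of_ne_finset_zero (s := {0}) fun k hk => by simp_all) (abs_lt.1 (by linarith))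
  rw [(hsum x).tsum_eq_zero_add] at this
  simpa using this

section SuccMulEq

variable {a w : ℕ → ℝ}

lemma nonneg_of_succ_mul_eq (hw₀ : ∀ k, 0 ≤ w k)
    (hrec : ∀ k : ℕ, (k + 1) * a (k + 1) = w k * a k) (ha₀ : 0 ≤ a 0) (k : ℕ) : 0 ≤ a k := by
  induction k with
  | zero => exact ha₀
  | succ k ih =>
    have : 0 ≤ (k + 1) * a (k + 1) := by rw [hrec]; exact mul_nonneg (hw₀ k) ih
    exact nonneg_of_mul_nonneg_right this (by positivity)

lemma le_pow_div_factorial_of_succ_mul_eq (hw₀ : ∀ k, 0 ≤ w k) (hw : Antitone w)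
    (hrec : ∀ k : ℕ, (k + 1) * a (k + 1) = w k * a k) (ha₀ : 0 ≤ a 0) (k : ℕ) :
    a k ≤ a 0 * w 0 ^ k / k ! := by
  induction k with
  | zero => simp
  | succ k ih =>
    have : (k + 1) * a (k + 1) ≤ (k + 1) * (a 0 * w 0 ^ (k + 1) / (k + 1)!) := by
      rw [hrec, Nat.factorial_succ, Nat.cast_mul, Nat.cast_succ]
      calc w k * a k ≤ w 0 * (a 0 * w 0 ^ k / k !) :=
            mul_le_mul (hw k.zero_le) ih (nonneg_of_succ_mul_eq hw₀ hrec ha₀ k) (hw₀ 0)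
        _ = _ := by field_simp; ring
    exact le_of_mul_le_mul_left this (by positivity)

lemma summable_mul_pow_of_succ_mul_eq (hw₀ : ∀ k, 0 ≤ w k) (hw : Antitone w)
    (hrec : ∀ k : ℕ, (k + 1) * a (k + 1) = w k * a k) (ha₀ : 0 ≤ a 0) (x : ℝ) :
    Summable fun k => a k * x ^ k := by
  refine .of_norm_bounded ((Real.summable_pow_div_factorial (w 0 * |x|)).mul_left (a 0))
    fun k => ?_
  rw [norm_mul, norm_pow, Real.norm_eq_abs, Real.norm_eq_abs,
    abs_of_nonneg (nonneg_of_succ_mul_eq hw₀ hrec ha₀ k), mul_pow]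
  calc a k * |x| ^ k ≤ a 0 * w 0 ^ k / k ! * |x| ^ k := by
        gcongr; exact le_pow_div_factorial_of_succ_mul_eq hw₀ hw hrec ha₀ k
    _ = _ := by ring

lemma summable_mul_mul_pow_of_succ_mul_eq (hw₀ : ∀ k, 0 ≤ w k) (hw : Antitone w)
    (hrec : ∀ k : ℕ, (k + 1) * a (k + 1) = w k * a k) (ha₀ : 0 ≤ a 0) (x : ℝ) :
    Summable fun k => w k * a k * x ^ k := by
  have hsum := summable_mul_pow_of_succ_mul_eq hw₀ hw hrec ha₀ x
  refine .of_norm_bounded (hsum.norm.mul_left (w 0)) fun k => ?_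
  rw [mul_assoc, norm_mul, Real.norm_eq_abs, abs_of_nonneg (hw₀ k)]
  exact mul_le_mul_of_nonneg_right (hw k.zero_le) (norm_nonneg _)

theorem concaveOn_log_tsum_mul_pow_of_succ_mul_eq (hw₀ : ∀ k, 0 ≤ w k) (hw : Antitone w)
    (hrec : ∀ k : ℕ, (k + 1) * a (k + 1) = w k * a k) (ha₀ : 0 < a 0) :
    ConcaveOn ℝ (Ioi 0) fun x => log (∑' k, a k * x ^ k) := by
  have hsum := summable_mul_pow_of_succ_mul_eq hw₀ hw hrec ha₀.le
  have hsum' := summable_mul_mul_pow_of_succ_mul_eq hw₀ hw hrec ha₀.le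
  have ha := nonneg_of_succ_mul_eq hw₀ hrec ha₀.le
  have hpos : ∀ x : ℝ, 0 ≤ x → 0 < ∑' k, a k * x ^ k := fun x hx =>
    (hsum x).tsum_pos (fun k => mul_nonneg (ha k) (pow_nonneg hx k)) 0 (by simpa using ha₀)
  have hderiv : ∀ x : ℝ, 0 ≤ x → HasDerivAt (fun x => log (∑' k, a k * x ^ k))
      ((∑' k, w k * a k * x ^ k) / ∑' k, a k * x ^ k) x := fun x hx => by
    refine HasDerivAt.log ?_ (hpos x hx).ne'
    simpa only [hrec] using
      hasDerivAt_tsum_mul_pow (a := a) (fun y => by simpa only [hrec] using hsum' y) x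
  refine AntitoneOn.concaveOn_of_deriv (convex_Ioi 0)
    (fun x hx => (hderiv x hx.le).continuousAt.continuousWithinAt) ?_ ?_ <;> rw [interior_Ioi]
  · exact fun x hx => (hderiv x hx.le).differentiableAt.differentiableWithinAt
  intro x hx y hy hxy
  rw [(hderiv x hx.le).deriv, (hderiv y hy.le).deriv, div_le_div_iff₀ (hpos y hy.le) (hpos x hx.le)]
  exact tsum_mul_pow_mul_tsum_pow_le ha hw hsum hsum' hx.le hxy

end SuccMulEq

lemma succ_mul_inv_Gamma_mul_succ_add_one {α : ℝ} (hα : 0 < α) (k : ℕ) :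
    (k + 1) * (Gamma (α * (k + 1 : ℕ) + 1))⁻¹ =
      Gamma (α * k + 1) / Gamma (α * k + α) / α * (Gamma (α * k + 1))⁻¹ := by
  have hk : 0 < α * k + α := by positivity
  rw [show α * (k + 1 : ℕ) + 1 = α * k + α + 1 by push_cast; ring, Gamma_add_one hk.ne']
  have := (Gamma_pos_of_pos hk).ne'
  have := (Gamma_pos_of_pos (show 0 < α * k + 1 by positivity)).ne'
  field_simp

theorem mittagLeffler_logConcave (α : ℝ) (hα : 1 < α) :
    ConcaveOn ℝ (Set.Ioi (0 : ℝ)) (fun x => Real.log (mittagLeffler α x)) := by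
  have hα₀ : 0 < α := by linarith
  have hE : (fun x => log (mittagLeffler α x)) =
      fun x => log (∑' k : ℕ, (Gamma (α * k + 1))⁻¹ * x ^ k) := by
    simp only [mittagLeffler, div_eq_inv_mul]
  rw [hE]
  refine concaveOn_log_tsum_mul_pow_of_succ_mul_eq (fun k => ?_) (fun m n hmn => ?_)
    (succ_mul_inv_Gamma_mul_succ_add_one hα₀) (by simp)
  · have := Gamma_pos_of_pos (show 0 < α * k + 1 by positivity)
    have := Gamma_pos_of_pos (show 0 < α * k + α by positivity)
    positivity
  · refine div_le_div_of_nonneg_right ?_ hα₀.le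
    exact antitoneOn_Gamma_add_div_Gamma_add one_pos hα.le (by positivity : (0 : ℝ) ≤ α * m)
      (by positivity : (0 : ℝ) ≤ α * n) (by gcongr)
end

section
/- For α > 1, the sequence n ↦ Γ(1+αn)/Γ(α+αn) (n ∈ ℕ) is decreasing, and for 0 < α < 1 it is increasing. -/
lemma gamma_cross_mul (x y e : ℝ) (hx : 0 < x) (hxy : x ≤ y) (he : 0 < e) :
    Real.Gamma y * Real.Gamma (x + e) ≤ Real.Gamma x * Real.Gamma (y + e) := by
  rcases eq_or_lt_of_le hxy with rfl | hxy
  · rw [mul_comm]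
  have hd : 0 < y + e - x := by linarith
  set t : ℝ := e / (y + e - x) with ht
  have ht0 : 0 ≤ t := by positivity
  have ht1 : t ≤ 1 := by rw [ht, div_le_one hd]; linarith
  have htd : t * (y + e - x) = e := div_mul_cancel₀ _ (ne_of_gt hd)
  have hmem1 : x ∈ Set.Ioi (0:ℝ) := hx
  have hmem2 : y + e ∈ Set.Ioi (0:ℝ) := by simp; linarith
  have h1 := Real.convexOn_log_Gamma.2 hmem1 hmem2 ht0 (by linarith : (0:ℝ) ≤ 1 - t) (by ring)
  have h2 := Real.convexOn_log_Gamma.2 hmem1 hmem2 (by linarith : (0:ℝ) ≤ 1 - t) ht0 (by ring)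
  simp only [Function.comp, smul_eq_mul] at h1 h2
  have e1 : t * x + (1 - t) * (y + e) = y := by linear_combination -htd
  have e2 : (1 - t) * x + t * (y + e) = x + e := by linear_combination htd
  rw [e1] at h1
  rw [e2] at h2
  have hgy := Real.Gamma_pos_of_pos (lt_of_lt_of_le hx hxy.le)
  have hgxe := Real.Gamma_pos_of_pos (by linarith : (0:ℝ) < x + e)
  have hgx := Real.Gamma_pos_of_pos hx
  have hgye := Real.Gamma_pos_of_pos (by linarith : (0:ℝ) < y + e)
  rw [← Real.log_le_log_iff (by positivity) (by positivity), Real.log_mul (ne_of_gt hgy)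
    (ne_of_gt hgxe), Real.log_mul (ne_of_gt hgx) (ne_of_gt hgye)]
  nlinarith [h1, h2]

theorem gamma_ratio_monotone (α : ℝ) (hα : 0 < α) :
    (1 < α → Antitone (fun n : ℕ => Real.Gamma (1 + α * n) / Real.Gamma (α + α * n))) ∧
    (α < 1 → Monotone (fun n : ℕ => Real.Gamma (1 + α * n) / Real.Gamma (α + α * n))) := by
  constructor
  · intro hα1
    apply antitone_nat_of_succ_le
    intro n
    have h1 : (0:ℝ) < 1 + α * n := by positivity
    have h2 : (0:ℝ) < α + α * n := by positivity
    have h3 : (0:ℝ) < 1 + α * (n+1) := by positivity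
    have h4 : (0:ℝ) < α + α * (n+1) := by positivity
    simp only [Nat.cast_succ]
    rw [div_le_div_iff₀ (Real.Gamma_pos_of_pos h4) (Real.Gamma_pos_of_pos h2)]
    have key := gamma_cross_mul (1 + α * n) (1 + α * (n+1)) (α - 1) h1
      (by nlinarith) (by linarith)
    have e1 : 1 + α * n + (α - 1) = α + α * n := by ring
    have e2 : 1 + α * (n+1) + (α - 1) = α + α * (n+1) := by ring
    rw [e1, e2] at key
    linarith [key]
  · intro hα1
    apply monotone_nat_of_le_succ
    intro n
    have h1 : (0:ℝ) < 1 + α * n := by positivity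
    have h2 : (0:ℝ) < α + α * n := by positivity
    have h3 : (0:ℝ) < 1 + α * (n+1) := by positivity
    have h4 : (0:ℝ) < α + α * (n+1) := by positivity
    simp only [Nat.cast_succ]
    rw [div_le_div_iff₀ (Real.Gamma_pos_of_pos h2) (Real.Gamma_pos_of_pos h4)]
    have key := gamma_cross_mul (α + α * n) (α + α * (n+1)) (1 - α) h2
      (by nlinarith) (by linarith)
    have e1 : α + α * n + (1 - α) = 1 + α * n := by ring
    have e2 : α + α * (n+1) + (1 - α) = 1 + α * (n+1) := by ring
    rw [e1, e2] at key
    linarith [key]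
end

section
/- Let α > 2 with ⌊α⌋ = 2m even and α ∉ ℕ. Then for all λ ∈ [1/2, 1] and k ≥ 1: ∑_{j=−m}^m (1 + 2λ cos(2jπ/α) + λ²)^{αk/2} ≤ α (1+λ)^{αk}. -/
/-!
Each base `b_j = 1 + 2l cos(2jπ/α) + l²` lies in `[0, (1+l)²]` and `p = αk/2 ≥ 1`, so
`b_j ^ p ≤ (1+l)^(2(p-1)) b_j`, and it suffices to bound `∑ b_j` by `α (1+l)²`.
Now `∑ b_j = (2m+1)(1+l²) + 2l ∑ cos(2jπ/α)`, and by the Dirichlet kernel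
`∑_{|j| ≤ m} cos(2jπ/α) = sin((2m+1)π/α) / sin(π/α) ≤ 0`, since `π < (2m+1)π/α < 2π`.
Finally `(2m+1)(1+l²) ≤ 2m(1+l)² < α(1+l)²` for `l ∈ [1/2, 1]` and `m ≥ 1`.
-/

open Real Finset

theorem Finset.sum_Icc_neg_natCast_eq_sum_range {M : Type*} [AddCommMonoid M] (m : ℕ)
    (f : ℤ → M) :
    ∑ j ∈ Icc (-(m : ℤ)) m, f j = ∑ i ∈ range (2 * m + 1), f (i - m) := by
  symm
  refine sum_nbij' (fun i ↦ (i : ℤ) - m) (fun j ↦ (j + m).toNat) ?_ ?_ ?_ ?_ (fun _ _ ↦ rfl) <;>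
    intro i hi <;> simp only [mem_range, mem_Icc] at hi ⊢ <;> omega

theorem Real.sin_half_mul_sum_Icc_cos (m : ℕ) (x : ℝ) :
    sin (x / 2) * ∑ j ∈ Icc (-(m : ℤ)) m, cos (j * x) = sin ((2 * m + 1) * x / 2) := by
  have h := sin_mul_sum_cos (2 * m + 1) x (-(m * x))
  push_cast at h
  rw [show (2 * (m : ℝ) + 1 - 1) * x / 2 + -(m * x) = 0 by ring, cos_zero, mul_one] at h
  rw [sum_Icc_neg_natCast_eq_sum_range, ← h]
  congr 1
  refine sum_congr rfl fun i _ ↦ ?_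
  push_cast
  ring_nf

theorem Real.sum_Icc_cos_two_mul_pi_div_nonpos {α : ℝ} {m : ℕ} (hα : 1 < α)
    (h₁ : 2 * m + 1 ≤ 2 * α) (h₂ : α ≤ 2 * m + 1) :
    ∑ j ∈ Icc (-(m : ℤ)) m, cos (2 * j * π / α) ≤ 0 := by
  have hα₀ : 0 < α := by linarith
  have hsin_pos : 0 < sin (π / α) := by
    apply sin_pos_of_pos_of_lt_pi (by positivity)
    rw [div_lt_iff₀ hα₀]
    nlinarith [pi_pos]
  have hsin_nonpos : sin ((2 * m + 1) * π / α) ≤ 0 := by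
    rw [← sin_sub_two_pi]
    apply sin_nonpos_of_nonpos_of_neg_pi_le
    · rw [sub_nonpos, div_le_iff₀ hα₀]; nlinarith [pi_pos]
    · rw [le_sub_iff_add_le, le_div_iff₀ hα₀]; nlinarith [pi_pos]
  have h := sin_half_mul_sum_Icc_cos m (2 * π / α)
  rw [show 2 * π / α / 2 = π / α by ring,
    show (2 * m + 1) * (2 * π / α) / 2 = (2 * m + 1) * π / α by ring] at h
  simp only [show ∀ j : ℤ, j * (2 * π / α) = 2 * j * π / α from fun j ↦ by ring] at h
  exact nonpos_of_mul_nonpos_right (h ▸ hsin_nonpos) hsin_pos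

theorem Real.rpow_le_rpow_sub_one_mul {b M p : ℝ} (hb : 0 ≤ b) (hbM : b ≤ M) (hp : 1 ≤ p) :
    b ^ p ≤ M ^ (p - 1) * b := by
  calc b ^ p = b ^ (p - 1 + 1) := by rw [sub_add_cancel]
    _ = b ^ (p - 1) * b := by rw [rpow_add' hb (by linarith), rpow_one]
    _ ≤ M ^ (p - 1) * b := by gcongr

theorem Real.sum_rpow_le_of_sum_le {ι : Type*} (s : Finset ι) {b : ι → ℝ} {M c p : ℝ}
    (hM : 0 ≤ M) (hb : ∀ i ∈ s, 0 ≤ b i) (hbM : ∀ i ∈ s, b i ≤ M) (hsum : ∑ i ∈ s, b i ≤ c * M)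
    (hp : 1 ≤ p) : ∑ i ∈ s, b i ^ p ≤ c * M ^ p := by
  calc ∑ i ∈ s, b i ^ p ≤ ∑ i ∈ s, M ^ (p - 1) * b i :=
        sum_le_sum fun i hi ↦ rpow_le_rpow_sub_one_mul (hb i hi) (hbM i hi) hp
    _ = M ^ (p - 1) * ∑ i ∈ s, b i := (mul_sum ..).symm
    _ ≤ M ^ (p - 1) * (c * M) := by gcongr
    _ = c * M ^ (p - 1 + 1) := by rw [rpow_add' hM (by linarith), rpow_one]; ring
    _ = c * M ^ p := by rw [sub_add_cancel]

theorem Real.one_add_two_mul_cos_add_sq_nonneg (l θ : ℝ) : 0 ≤ 1 + 2 * l * cos θ + l ^ 2 := by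
  nlinarith [sin_sq_add_cos_sq θ, sq_nonneg (l + cos θ)]

theorem Real.one_add_two_mul_cos_add_sq_le {l : ℝ} (hl : 0 ≤ l) (θ : ℝ) :
    1 + 2 * l * cos θ + l ^ 2 ≤ (1 + l) ^ 2 := by
  nlinarith [cos_le_one θ]

theorem Real.sum_Icc_one_add_two_mul_cos_add_sq_le {α l : ℝ} {m : ℕ} (hm : 1 ≤ m)
    (h₁ : 2 * m ≤ α) (h₂ : α ≤ 2 * m + 1) (hl₁ : 1 / 2 ≤ l) (hl₂ : l ≤ 1) :
    ∑ j ∈ Icc (-(m : ℤ)) m, (1 + 2 * l * cos (2 * j * π / α) + l ^ 2) ≤ α * (1 + l) ^ 2 := by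
  have hm' : (1 : ℝ) ≤ m := by exact_mod_cast hm
  have hcos := sum_Icc_cos_two_mul_pi_div_nonpos (m := m) (by linarith) (by linarith) h₂
  have hcard : (#(Icc (-(m : ℤ)) m) : ℝ) = 2 * m + 1 := by
    rw [Int.card_Icc]; norm_cast; omega
  calc ∑ j ∈ Icc (-(m : ℤ)) m, (1 + 2 * l * cos (2 * j * π / α) + l ^ 2)
      = (2 * m + 1) * (1 + l ^ 2) + 2 * l * ∑ j ∈ Icc (-(m : ℤ)) m, cos (2 * j * π / α) := by
        simp only [sum_add_distrib, ← mul_sum, sum_const, nsmul_eq_mul, hcard]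
        ring
    _ ≤ 2 * m * (1 + l) ^ 2 := by nlinarith
    _ ≤ α * (1 + l) ^ 2 := by gcongr

theorem cos_sum_bound (α : ℝ) (m : ℕ) (hm : 1 ≤ m)
    (h1 : (2 * m : ℝ) < α) (h2 : α < 2 * m + 1)
    (l : ℝ) (hl : l ∈ Set.Icc (1/2 : ℝ) 1) (k : ℕ) (hk : 1 ≤ k) :
    ∑ j ∈ Finset.Icc (-(m : ℤ)) (m : ℤ),
        (1 + 2 * l * Real.cos (2 * j * Real.pi / α) + l ^ 2) ^ (α * k / 2) ≤
      α * (1 + l) ^ (α * k) := by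
  obtain ⟨hl₁, hl₂⟩ := hl
  have hp : 1 ≤ α * k / 2 := by
    have hm' : (1 : ℝ) ≤ m := by exact_mod_cast hm
    have hk' : (1 : ℝ) ≤ k := by exact_mod_cast hk
    nlinarith
  have h := sum_rpow_le_of_sum_le _ (by positivity)
    (fun j _ ↦ one_add_two_mul_cos_add_sq_nonneg l _)
    (fun j _ ↦ one_add_two_mul_cos_add_sq_le (by linarith) _)
    (sum_Icc_one_add_two_mul_cos_add_sq_le hm h1.le h2.le hl₁ hl₂) hp
  have hpow : ((1 + l) ^ 2) ^ (α * k / 2) = (1 + l) ^ (α * k) := by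
    rw [← rpow_natCast, ← rpow_mul (by linarith)]
    push_cast
    ring_nf
  rwa [hpow] at h
end

section
/- For α > 2 with ⌊α⌋ even and α ∉ ℕ, the integral identity ∫_0^∞ s^{α−1}/(s^{2α} − 2 s^α cos(απ) + 1) ds = π(⌈α⌉ − α)/(α sin(απ)) holds. -/
/-!
Substituting `t = s ^ α` turns the integral into `α⁻¹ ∫₀^∞ dt / (t² - 2 t cos(απ) + 1)`.
Since `⌊α⌋` is even, `απ` differs from `θ = fract(α) π ∈ (0, π)` by a multiple of `2π`, and
completing the square gives the arctangent primitive, with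
`∫₀^∞ dt / ((t - cos θ)² + sin² θ) = (π/2 + arctan (cot θ)) / sin θ = (π - θ) / sin θ`.
Finally `π - θ = π (⌈α⌉ - α)` because `α` is not an integer.
-/

open Real MeasureTheory Set Filter

lemma hasDerivAt_arctan_sub_div_div (c : ℝ) {s : ℝ} (hs : s ≠ 0) (t : ℝ) :
    HasDerivAt (fun t => arctan ((t - c) / s) / s) (1 / ((t - c) ^ 2 + s ^ 2)) t := by
  have hinner : HasDerivAt (fun t => (t - c) / s) (1 / s) t := by
    simpa using ((hasDerivAt_id t).sub_const c).div_const s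
  refine (((hasDerivAt_arctan _).comp t hinner).div_const s).congr_deriv ?_
  field_simp
  ring

lemma integral_Ioi_one_div_sub_sq_add_sq (c : ℝ) {s : ℝ} (hs : 0 < s) :
    ∫ t in Ioi (0 : ℝ), 1 / ((t - c) ^ 2 + s ^ 2) = (π / 2 + arctan (c / s)) / s := by
  have hlim : Tendsto (fun t => arctan ((t - c) / s) / s) atTop (nhds ((π / 2) / s)) :=
    ((tendsto_arctan_atTop.mono_right nhdsWithin_le_nhds).comp
      ((tendsto_atTop_add_const_right _ _ tendsto_id).atTop_div_const hs)).div_const s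
  rw [integral_Ioi_of_hasDerivAt_of_nonneg'
    (fun t _ => hasDerivAt_arctan_sub_div_div c hs.ne' t) (fun t _ => by positivity) hlim]
  simp only [zero_sub, neg_div, arctan_neg]
  ring

lemma arctan_cos_div_sin {θ : ℝ} (h0 : 0 < θ) (hπ : θ < π) :
    arctan (cos θ / sin θ) = π / 2 - θ := by
  rw [← cos_pi_div_two_sub, ← sin_pi_div_two_sub, ← tan_eq_sin_div_cos, arctan_tan] <;>
    linarith

lemma integral_Ioi_one_div_sq_sub_two_mul_cos_add_one {θ : ℝ} (h0 : 0 < θ) (hπ : θ < π) :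
    ∫ t in Ioi (0 : ℝ), 1 / (t ^ 2 - 2 * t * cos θ + 1) = (π - θ) / sin θ := by
  have hsq (t : ℝ) : t ^ 2 - 2 * t * cos θ + 1 = (t - cos θ) ^ 2 + sin θ ^ 2 := by
    linear_combination (sin_sq_add_cos_sq θ).symm
  simp_rw [hsq]
  rw [integral_Ioi_one_div_sub_sq_add_sq _ (sin_pos_of_pos_of_lt_pi h0 hπ),
    arctan_cos_div_sin h0 hπ]
  ring

lemma integral_Ioi_rpow_sub_one_div_rpow_quadratic {α : ℝ} (hα : 0 < α) (c : ℝ) :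
    ∫ s in Ioi (0 : ℝ), s ^ (α - 1) / (s ^ (2 * α) - 2 * s ^ α * c + 1) =
      (∫ t in Ioi (0 : ℝ), 1 / (t ^ 2 - 2 * t * c + 1)) / α := by
  rw [← integral_comp_rpow_Ioi_of_pos (g := fun t => 1 / (t ^ 2 - 2 * t * c + 1)) hα,
    ← integral_div]
  refine setIntegral_congr_fun measurableSet_Ioi fun s (hs : 0 < s) => ?_
  rw [smul_eq_mul, mul_comm 2 α, rpow_mul hs.le, rpow_two]
  field_simp

lemma exists_mul_pi_eq_fract_mul_pi_add_int_mul_two_pi {α : ℝ} (h : Even ⌊α⌋) :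
    ∃ m : ℤ, α * π = Int.fract α * π + m * (2 * π) := by
  obtain ⟨m, hm⟩ := h
  refine ⟨m, ?_⟩
  rw [← Int.self_sub_floor, hm]
  push_cast
  ring

lemma cos_mul_pi_of_even_floor {α : ℝ} (h : Even ⌊α⌋) :
    cos (α * π) = cos (Int.fract α * π) := by
  obtain ⟨m, hm⟩ := exists_mul_pi_eq_fract_mul_pi_add_int_mul_two_pi h
  rw [hm, cos_add_int_mul_two_pi]

lemma sin_mul_pi_of_even_floor {α : ℝ} (h : Even ⌊α⌋) :
    sin (α * π) = sin (Int.fract α * π) := by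
  obtain ⟨m, hm⟩ := exists_mul_pi_eq_fract_mul_pi_add_int_mul_two_pi h
  rw [hm, sin_add_int_mul_two_pi]

lemma fract_ne_zero_of_ne_natCast {α : ℝ} (h0 : 0 ≤ α) (h : ∀ n : ℕ, α ≠ n) :
    Int.fract α ≠ 0 := by
  rw [Ne, ← Int.self_sub_floor, sub_eq_zero, ← Int.natCast_floor_eq_floor h0]
  exact_mod_cast h ⌊α⌋₊

theorem integral_identity_one (α : ℝ) (hα : 2 < α) (heven : Even ⌊α⌋)
    (hnot : ∀ n : ℕ, α ≠ n) :
    ∫ s in Set.Ioi (0 : ℝ),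
        s ^ (α - 1) / (s ^ (2 * α) - 2 * s ^ α * Real.cos (α * Real.pi) + 1) =
      Real.pi * ((⌈α⌉ : ℝ) - α) / (α * Real.sin (α * Real.pi)) := by
  have hfract : Int.fract α ≠ 0 := fract_ne_zero_of_ne_natCast (by linarith) hnot
  have hθ0 : 0 < Int.fract α * π := mul_pos ((Int.fract_nonneg α).lt_of_ne' hfract) pi_pos
  have hθπ : Int.fract α * π < π := mul_lt_of_lt_one_left pi_pos (Int.fract_lt_one α)
  rw [integral_Ioi_rpow_sub_one_div_rpow_quadratic (by linarith), cos_mul_pi_of_even_floor heven,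
    integral_Ioi_one_div_sq_sub_two_mul_cos_add_one hθ0 hθπ, sin_mul_pi_of_even_floor heven,
    Int.ceil_eq_add_one_sub_fract hfract]
  ring
end
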